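/- Let u be a C³ solution of Δu + e^{2u} = 0 on an open subset of ℂ. Then the function P = u_{zz} - (u_z)², where u_z = (u_x - i u_y)/2 and u_{zz} = ∂_z(u_z), is holomorphic, i.e. ∂_{z̄}(u_{zz} - u_z²) = 0. -/

import Mathlib

/-!
Write `U` for `u` viewed as a complex-valued function. Since `∂_z̄ ∂_z = Δ / 4` on `C²` functions,
the equation reads `∂_z̄ U_z = -e^{2u} / 4`. Commuting `∂_z̄` past one `∂_z` then gives
`∂_z̄ U_zz = ∂_z (-e^{2u} / 4) = -e^{2u} U_z / 2 = 2 U_z ∂_z̄ U_z = ∂_z̄ (U_z²)`.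
-/

noncomputable def pdx (f : ℂ → ℝ) (z : ℂ) : ℝ := fderiv ℝ f z 1
noncomputable def pdy (f : ℂ → ℝ) (z : ℂ) : ℝ := fderiv ℝ f z Complex.I

noncomputable def pdxC (f : ℂ → ℂ) (z : ℂ) : ℂ := fderiv ℝ f z 1
noncomputable def pdyC (f : ℂ → ℂ) (z : ℂ) : ℂ := fderiv ℝ f z Complex.I

/-- Wirtinger derivative ∂_z = (∂_x - i ∂_y)/2. -/
noncomputable def dz (f : ℂ → ℂ) (z : ℂ) : ℂ := (pdxC f z - Complex.I * pdyC f z) / 2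

/-- Wirtinger derivative ∂_{z̄} = (∂_x + i ∂_y)/2. -/
noncomputable def dzbar (f : ℂ → ℂ) (z : ℂ) : ℂ := (pdxC f z + Complex.I * pdyC f z) / 2

open Complex Filter Topology

section
variable {E F : Type*} [NormedAddCommGroup E] [NormedSpace ℝ E] [NormedAddCommGroup F]
  [NormedSpace ℝ F] {f : E → F} {x : E}

lemma ContDiffAt.hasFDerivAt_fderiv (hf : ContDiffAt ℝ 2 f x) :
    HasFDerivAt (fderiv ℝ f) (fderiv ℝ (fderiv ℝ f) x) x :=
  ((hf.fderiv_right (m := 1) le_rfl).differentiableAt one_ne_zero).hasFDerivAt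

lemma ContDiffAt.hasFDerivAt_fderiv_apply (hf : ContDiffAt ℝ 2 f x) (v : E) :
    HasFDerivAt (fun y => fderiv ℝ f y v) ((fderiv ℝ (fderiv ℝ f) x).flip v) x := by
  simpa using hf.hasFDerivAt_fderiv.clm_apply (hasFDerivAt_const v x)

lemma HasFDerivAt.ofReal_comp {u : E → ℝ} {L : E →L[ℝ] ℝ} (hu : HasFDerivAt u L x) :
    HasFDerivAt (fun y => (u y : ℂ)) (ofRealCLM.comp L) x :=
  ofRealCLM.hasFDerivAt.comp x hu

lemma ContDiffAt.ofReal_comp {u : E → ℝ} {n : WithTop ℕ∞} (hu : ContDiffAt ℝ n u x) :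
    ContDiffAt ℝ n (fun y => (u y : ℂ)) x :=
  ofRealCLM.contDiff.contDiffAt.comp x hu

end

section Wirtinger
variable {f g : ℂ → ℂ} {z : ℂ}

lemma dzbar_eq_of_hasFDerivAt {L : ℂ →L[ℝ] ℂ} (h : HasFDerivAt f L z) :
    dzbar f z = (L 1 + I * L I) / 2 := by
  simp only [dzbar, pdxC, pdyC, h.fderiv]

lemma dzbar_sub (hf : DifferentiableAt ℝ f z) (hg : DifferentiableAt ℝ g z) :
    dzbar (fun w => f w - g w) z = dzbar f z - dzbar g z := by
  rw [dzbar_eq_of_hasFDerivAt (hf.hasFDerivAt.fun_sub hg.hasFDerivAt),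
    dzbar_eq_of_hasFDerivAt hf.hasFDerivAt, dzbar_eq_of_hasFDerivAt hg.hasFDerivAt]
  simp only [sub_apply]
  ring

lemma dzbar_sq (hg : DifferentiableAt ℝ g z) :
    dzbar (fun w => g w ^ 2) z = 2 * g z * dzbar g z := by
  rw [dzbar_eq_of_hasFDerivAt (hg.hasFDerivAt.pow 2), dzbar_eq_of_hasFDerivAt hg.hasFDerivAt]
  simp only [Nat.add_one_sub_one, pow_one, nsmul_eq_mul, Nat.cast_ofNat, smul_apply, smul_eq_mul]
  ring

lemma Filter.EventuallyEq.dz_eq (h : f =ᶠ[𝓝 z] g) : dz f z = dz g z := by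
  simp only [dz, pdxC, pdyC, h.fderiv_eq]

lemma ContDiffAt.dz {n : WithTop ℕ∞} (hf : ContDiffAt ℝ (n + 1) f z) :
    ContDiffAt ℝ n (dz f) z := by
  have hf' := hf.fderiv_right_succ
  exact ((hf'.clm_apply contDiffAt_const).sub
    (contDiffAt_const.mul (hf'.clm_apply contDiffAt_const))).div_const 2

lemma fderiv_dz_apply (hf : ContDiffAt ℝ 2 f z) (v : ℂ) :
    fderiv ℝ (dz f) z v =
      (fderiv ℝ (fderiv ℝ f) z v 1 - I * fderiv ℝ (fderiv ℝ f) z v I) / 2 := by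
  have h : dz f = fun w => (fderiv ℝ f w 1 - I * fderiv ℝ f w I) * 2⁻¹ := by
    funext w; simp only [dz, pdxC, pdyC, div_eq_mul_inv]
  rw [h, (((hf.hasFDerivAt_fderiv_apply 1).fun_sub
    ((hf.hasFDerivAt_fderiv_apply I).const_mul I)).mul_const _).fderiv]
  simp only [smul_apply, sub_apply, ContinuousLinearMap.flip_apply, smul_eq_mul, div_eq_mul_inv]
  ring

lemma fderiv_dzbar_apply (hf : ContDiffAt ℝ 2 f z) (v : ℂ) :
    fderiv ℝ (dzbar f) z v =
      (fderiv ℝ (fderiv ℝ f) z v 1 + I * fderiv ℝ (fderiv ℝ f) z v I) / 2 := by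
  have h : dzbar f = fun w => (fderiv ℝ f w 1 + I * fderiv ℝ f w I) * 2⁻¹ := by
    funext w; simp only [dzbar, pdxC, pdyC, div_eq_mul_inv]
  rw [h, (((hf.hasFDerivAt_fderiv_apply 1).fun_add
    ((hf.hasFDerivAt_fderiv_apply I).const_mul I)).mul_const _).fderiv]
  simp only [smul_add, add_apply, smul_apply, ContinuousLinearMap.flip_apply, smul_eq_mul,
    div_eq_mul_inv]
  ring

lemma pdxC_pdxC_add_pdyC_pdyC (hf : ContDiffAt ℝ 2 f z) :
    pdxC (pdxC f) z + pdyC (pdyC f) z =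
      fderiv ℝ (fderiv ℝ f) z 1 1 + fderiv ℝ (fderiv ℝ f) z I I := by
  show fderiv ℝ (fun w => fderiv ℝ f w 1) z 1 + fderiv ℝ (fun w => fderiv ℝ f w I) z I = _
  rw [(hf.hasFDerivAt_fderiv_apply 1).fderiv, (hf.hasFDerivAt_fderiv_apply I).fderiv]
  rfl

lemma dzbar_dz (hf : ContDiffAt ℝ 2 f z) :
    dzbar (dz f) z = (pdxC (pdxC f) z + pdyC (pdyC f) z) / 4 := by
  have hsymm := hf.isSymmSndFDerivAt (by simp) 1 I
  rw [pdxC_pdxC_add_pdyC_pdyC hf]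
  simp only [dzbar, pdxC, pdyC, fderiv_dz_apply hf, hsymm]
  ring_nf; rw [I_sq]; ring

lemma dz_dzbar (hf : ContDiffAt ℝ 2 f z) :
    dz (dzbar f) z = (pdxC (pdxC f) z + pdyC (pdyC f) z) / 4 := by
  have hsymm := hf.isSymmSndFDerivAt (by simp) 1 I
  rw [pdxC_pdxC_add_pdyC_pdyC hf]
  simp only [dz, pdxC, pdyC, fderiv_dzbar_apply hf, hsymm]
  ring_nf; rw [I_sq]; ring

section ofReal
variable {u : ℂ → ℝ}

lemma fderiv_ofReal_comp_apply (hu : DifferentiableAt ℝ u z) (v : ℂ) :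
    fderiv ℝ (fun w => (u w : ℂ)) z v = fderiv ℝ u z v := by
  rw [hu.hasFDerivAt.ofReal_comp.fderiv]
  rfl

lemma dz_ofReal_comp (hu : DifferentiableAt ℝ u z) :
    dz (fun w => (u w : ℂ)) z = (pdx u z - I * pdy u z) / 2 := by
  simp only [dz, pdxC, pdyC, pdx, pdy, fderiv_ofReal_comp_apply hu]

lemma dz_ofReal_comp_comp {φ : ℝ → ℝ} {φ' : ℝ} (hφ : HasDerivAt φ φ' (u z))
    (hu : DifferentiableAt ℝ u z) :
    dz (fun w => (φ (u w) : ℂ)) z = φ' * dz (fun w => (u w : ℂ)) z := by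
  have h : HasFDerivAt (fun w => φ (u w)) (φ' • fderiv ℝ u z) z :=
    hφ.comp_hasFDerivAt z hu.hasFDerivAt
  rw [dz_ofReal_comp h.differentiableAt, dz_ofReal_comp hu, pdx, pdy, pdx, pdy, h.fderiv]
  simp only [smul_apply, smul_eq_mul]
  push_cast
  ring

lemma fderiv_fderiv_ofReal_comp_apply (hu : ContDiffAt ℝ 2 u z) (v w : ℂ) :
    fderiv ℝ (fun y => fderiv ℝ (fun x => (u x : ℂ)) y v) z w =
      fderiv ℝ (fun y => fderiv ℝ u y v) z w := by
  have hev : (fun y => fderiv ℝ (fun x => (u x : ℂ)) y v) =ᶠ[𝓝 z]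
      fun y => (fderiv ℝ u y v : ℂ) :=
    (hu.eventually (by simp)).mono fun y hy =>
      fderiv_ofReal_comp_apply (hy.differentiableAt two_ne_zero) v
  rw [hev.fderiv_eq, fderiv_ofReal_comp_apply (hu.hasFDerivAt_fderiv_apply v).differentiableAt]

lemma dzbar_dz_ofReal_comp (hu : ContDiffAt ℝ 2 u z) :
    dzbar (dz (fun w => (u w : ℂ))) z = ((pdx (pdx u) z + pdy (pdy u) z : ℝ) : ℂ) / 4 := by
  rw [dzbar_dz hu.ofReal_comp]
  show (fderiv ℝ (fun y => fderiv ℝ (fun x => (u x : ℂ)) y 1) z 1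
      + fderiv ℝ (fun y => fderiv ℝ (fun x => (u x : ℂ)) y I) z I) / 4 = _
  rw [fderiv_fderiv_ofReal_comp_apply hu, fderiv_fderiv_ofReal_comp_apply hu]
  push_cast
  rfl

end ofReal

end Wirtinger

lemma hasDerivAt_neg_exp_two_mul_div_four (t : ℝ) :
    HasDerivAt (fun s => -Real.exp (2 * s) / 4) (-Real.exp (2 * t) / 2) t := by
  refine (((hasDerivAt_id' t).const_mul 2).exp.fun_neg.div_const 4).congr_deriv ?_
  ring

theorem stmt3 (Ω : Set ℂ) (hΩ : IsOpen Ω) (u : ℂ → ℝ)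
    (hreg : ContDiffOn ℝ 3 u Ω)
    (hu : ∀ z ∈ Ω, pdx (pdx u) z + pdy (pdy u) z + Real.exp (2 * u z) = 0) :
    ∀ z ∈ Ω,
      dzbar (fun w => dz (dz (fun ζ => (u ζ : ℂ))) w - (dz (fun ζ => (u ζ : ℂ)) w) ^ 2) z = 0 := by
  intro z hz
  set U : ℂ → ℂ := fun ζ => (u ζ : ℂ)
  have hu3 : ∀ w ∈ Ω, ContDiffAt ℝ 3 u w := fun w hw => hreg.contDiffAt (hΩ.mem_nhds hw)
  have hlap : ∀ w ∈ Ω, dzbar (dz U) w = ((-Real.exp (2 * u w) / 4 : ℝ) : ℂ) := by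
    intro w hw
    rw [dzbar_dz_ofReal_comp ((hu3 w hw).of_le (by norm_num)), eq_neg_of_add_eq_zero_left (hu w hw)]
    push_cast
    ring
  have hlap_nhds : dzbar (dz U) =ᶠ[𝓝 z] fun w => ((-Real.exp (2 * u w) / 4 : ℝ) : ℂ) :=
    Filter.eventually_of_mem (hΩ.mem_nhds hz) hlap
  have hU : ContDiffAt ℝ (1 + 1 + 1) U z := (hu3 z hz).ofReal_comp
  have hdzU : DifferentiableAt ℝ (dz U) z := hU.dz.differentiableAt (by norm_num)
  calc dzbar (fun w => dz (dz U) w - dz U w ^ 2) z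
      = dzbar (dz (dz U)) z - 2 * dz U z * dzbar (dz U) z := by
        rw [dzbar_sub (hU.dz.dz.differentiableAt one_ne_zero) (hdzU.fun_pow 2), dzbar_sq hdzU]
    _ = dz (fun w => ((-Real.exp (2 * u w) / 4 : ℝ) : ℂ)) z
          - 2 * dz U z * ((-Real.exp (2 * u z) / 4 : ℝ) : ℂ) := by
        rw [dzbar_dz hU.dz, ← dz_dzbar hU.dz, hlap_nhds.dz_eq, hlap z hz]
    _ = 0 := by
        rw [dz_ofReal_comp_comp (hasDerivAt_neg_exp_two_mul_div_four (u z))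
          ((hu3 z hz).differentiableAt (by norm_num))]
        push_cast
        ring
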